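/- arXiv:1603.05334 — 2 statements merged into one kernel-verified Lean document; each statement's English description precedes it below -/
import Mathlib

section
/- Let (a,b) be an open real interval (endpoints possibly infinite), and let f, g : ℝ → ℝ be probability densities with respect to Lebesgue measure that are strictly positive on (a,b) and vanish outside it, with cumulative distribution functions F(x) = ∫_a^x f(y) dy and G(x) = ∫_a^x g(y) dy (so F and G are differentiable and strictly increasing on (a,b), and G⁻¹ is well-defined on (0,1)). If the likelihood ratio x ↦ f(x)/g(x) is strictly increasing on (a,b), then the ROC curve x ↦ F(G⁻¹(x)) is strictly convex on (0,1); if x ↦ f(x)/g(x) is strictly decreasing on (a,b), then x ↦ F(G⁻¹(x)) is strictly concave on (0,1). -/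
/-!
On an interval `[u, v] ⊆ (0, 1)` the chord slope of the ROC curve `F ∘ G⁻¹` is
`(∫ f) / (∫ g)` over `[G⁻¹ u, G⁻¹ v]`. If `f / g` is strictly increasing, then on adjacent
intervals `[x₁, x₂]` and `[x₂, x₃]` we have `f < r g` on the first and `f > r g` on the second,
where `r = f x₂ / g x₂`; so the slope over the first interval is `< r` and over the second is
`> r`, which is strict convexity. The decreasing case is the increasing case applied to `-f`.
-/

open MeasureTheory Set intervalIntegral

theorem integral_lt_integral_of_lt_on_Ioo {f g : ℝ → ℝ} {a b : ℝ} (hab : a < b)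
    (hf : IntervalIntegrable f volume a b) (hg : IntervalIntegrable g volume a b)
    (h : ∀ x ∈ Ioo a b, f x < g x) : ∫ x in a..b, f x < ∫ x in a..b, g x := by
  have := intervalIntegral_pos_of_pos_on (hg.sub hf) (fun x hx => sub_pos.2 (h x hx)) hab
  rwa [intervalIntegral.integral_sub hg hf, sub_pos] at this

section LikelihoodRatio

variable {S : Set ℝ} {f g : ℝ → ℝ}

theorem integral_div_integral_lt_of_strictMonoOn_div (hS : S.OrdConnected)
    (hg_pos : ∀ x ∈ S, 0 < g x) (hmono : StrictMonoOn (fun x => f x / g x) S)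
    (hf : LocallyIntegrable f) (hg : LocallyIntegrable g) {x₁ x₂ x₃ : ℝ}
    (h₁ : x₁ ∈ S) (h₃ : x₃ ∈ S) (h₁₂ : x₁ < x₂) (h₂₃ : x₂ < x₃) :
    (∫ x in x₁..x₂, f x) / (∫ x in x₁..x₂, g x) <
      (∫ x in x₂..x₃, f x) / (∫ x in x₂..x₃, g x) := by
  have mem_S {y} (hy₁ : x₁ < y) (hy₃ : y < x₃) : y ∈ S := hS.out h₁ h₃ ⟨hy₁.le, hy₃.le⟩
  have h₂ : x₂ ∈ S := mem_S h₁₂ h₂₃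
  have hfi (x y : ℝ) : IntervalIntegrable f volume x y :=
    (hf.integrableOn_isCompact isCompact_uIcc).intervalIntegrable
  have hgi (x y : ℝ) : IntervalIntegrable g volume x y :=
    (hg.integrableOn_isCompact isCompact_uIcc).intervalIntegrable
  set r := f x₂ / g x₂
  have hg₁ : 0 < ∫ x in x₁..x₂, g x := intervalIntegral_pos_of_pos_on
    (hgi _ _) (fun y hy => hg_pos y (mem_S hy.1 (hy.2.trans h₂₃))) h₁₂
  have hg₂ : 0 < ∫ x in x₂..x₃, g x := intervalIntegral_pos_of_pos_on
    (hgi _ _) (fun y hy => hg_pos y (mem_S (h₁₂.trans hy.1) hy.2)) h₂₃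
  have below : (∫ x in x₁..x₂, f x) < r * ∫ x in x₁..x₂, g x := by
    rw [← intervalIntegral.integral_const_mul]
    refine integral_lt_integral_of_lt_on_Ioo h₁₂ (hfi _ _) ((hgi _ _).const_mul r) fun y hy => ?_
    have hyS : y ∈ S := mem_S hy.1 (hy.2.trans h₂₃)
    exact (div_lt_iff₀ (hg_pos y hyS)).1 (hmono hyS h₂ hy.2)
  have above : r * (∫ x in x₂..x₃, g x) < ∫ x in x₂..x₃, f x := by
    rw [← intervalIntegral.integral_const_mul]
    refine integral_lt_integral_of_lt_on_Ioo h₂₃ ((hgi _ _).const_mul r) (hfi _ _) fun y hy => ?_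
    have hyS : y ∈ S := mem_S (h₁₂.trans hy.1) hy.2
    exact (lt_div_iff₀ (hg_pos y hyS)).1 (hmono h₂ hyS hy.1)
  exact ((div_lt_iff₀ hg₁).2 below).trans ((lt_div_iff₀ hg₂).2 above)

theorem strictMonoOn_integral_Iic (hS : S.OrdConnected) (hg_pos : ∀ x ∈ S, 0 < g x)
    (hg : Integrable g) : StrictMonoOn (fun x => ∫ y in Iic x, g y) S := by
  intro x hx y hy hxy
  rw [← sub_pos, integral_Iic_sub_Iic hg.integrableOn hg.integrableOn]
  exact intervalIntegral_pos_of_pos_on hg.intervalIntegrable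
    (fun z hz => hg_pos z (hS.out hx hy (Ioo_subset_Icc_self hz))) hxy

theorem strictConvexOn_comp_inverse_cdf_of_strictMonoOn_div (hS : S.OrdConnected)
    (hg_pos : ∀ x ∈ S, 0 < g x) (hmono : StrictMonoOn (fun x => f x / g x) S)
    (hf : Integrable f) (hg : Integrable g) {F G Ginv : ℝ → ℝ}
    (hF : ∀ x, F x = ∫ y in Iic x, f y) (hG : ∀ x, G x = ∫ y in Iic x, g y)
    {I : Set ℝ} (hI : Convex ℝ I) (hGinv : ∀ u ∈ I, Ginv u ∈ S ∧ G (Ginv u) = u) :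
    StrictConvexOn ℝ I (fun u => F (Ginv u)) := by
  have hG_mono : StrictMonoOn G S := by
    simpa only [← hG] using strictMonoOn_integral_Iic hS hg_pos hg
  have hGinv_lt {u v} (hu : u ∈ I) (hv : v ∈ I) (huv : u < v) : Ginv u < Ginv v := by
    rwa [← hG_mono.lt_iff_lt (hGinv u hu).1 (hGinv v hv).1, (hGinv u hu).2, (hGinv v hv).2]
  have hslope {u v} (hu : u ∈ I) (hv : v ∈ I) :
      (F (Ginv v) - F (Ginv u)) / (v - u) =
        (∫ x in Ginv u..Ginv v, f x) / (∫ x in Ginv u..Ginv v, g x) := by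
    rw [← integral_Iic_sub_Iic hg.integrableOn hg.integrableOn, ← hG, ← hG, (hGinv u hu).2,
      (hGinv v hv).2, hF, hF, integral_Iic_sub_Iic hf.integrableOn hf.integrableOn]
  refine strictConvexOn_of_slope_strict_mono_adjacent hI fun {u v w} hu hw huv hvw => ?_
  have hv : v ∈ I := hI.ordConnected.out hu hw ⟨huv.le, hvw.le⟩
  rw [hslope hu hv, hslope hv hw]
  exact integral_div_integral_lt_of_strictMonoOn_div hS hg_pos hmono hf.locallyIntegrable
    hg.locallyIntegrable (hGinv u hu).1 (hGinv w hw).1 (hGinv_lt hu hv huv) (hGinv_lt hv hw hvw)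

end LikelihoodRatio

theorem stmt_0_general (a b : EReal) (f g : ℝ → ℝ)
    (hg_pos : ∀ x : ℝ, a < (x : EReal) → (x : EReal) < b → 0 < g x)
    (hf_int : MeasureTheory.Integrable f) (hg_int : MeasureTheory.Integrable g)
    (F G : ℝ → ℝ)
    (hF : ∀ x : ℝ, F x = ∫ y in Set.Iic x, f y)
    (hG : ∀ x : ℝ, G x = ∫ y in Set.Iic x, g y)
    (Ginv : ℝ → ℝ)
    (hGinv : ∀ u ∈ Set.Ioo (0 : ℝ) 1,
      a < (Ginv u : EReal) ∧ (Ginv u : EReal) < b ∧ G (Ginv u) = u) :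
    (StrictMonoOn (fun x => f x / g x) {x : ℝ | a < (x : EReal) ∧ (x : EReal) < b} →
      StrictConvexOn ℝ (Set.Ioo (0 : ℝ) 1) (fun x => F (Ginv x))) ∧
    (StrictAntiOn (fun x => f x / g x) {x : ℝ | a < (x : EReal) ∧ (x : EReal) < b} →
      StrictConcaveOn ℝ (Set.Ioo (0 : ℝ) 1) (fun x => F (Ginv x))) := by
  set S : Set ℝ := {x : ℝ | a < (x : EReal) ∧ (x : EReal) < b}
  have hS : S.OrdConnected := ordConnected_Ioo.preimage_mono EReal.coe_strictMono.monotone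
  have hg_pos' : ∀ x ∈ S, 0 < g x := fun x hx => hg_pos x hx.1 hx.2
  have hGinv' : ∀ u ∈ Ioo (0 : ℝ) 1, Ginv u ∈ S ∧ G (Ginv u) = u :=
    fun u hu => ⟨⟨(hGinv u hu).1, (hGinv u hu).2.1⟩, (hGinv u hu).2.2⟩
  refine ⟨fun hmono => strictConvexOn_comp_inverse_cdf_of_strictMonoOn_div hS hg_pos' hmono
    hf_int hg_int hF hG (convex_Ioo 0 1) hGinv', fun hanti => ?_⟩
  rw [← neg_strictConvexOn_iff]
  refine strictConvexOn_comp_inverse_cdf_of_strictMonoOn_div (f := -f) (F := -F) hS hg_pos' ?_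
    hf_int.neg hg_int (fun x => by simp [hF, MeasureTheory.integral_neg]) hG (convex_Ioo 0 1)
    hGinv'
  simpa only [Pi.neg_apply, neg_div] using hanti.neg

/-- If `f` (alternative density) and `g` (null density) are probability densities on ℝ,
supported and strictly positive exactly on an open interval `(a,b)` (endpoints possibly
infinite, encoded via `EReal`), with CDFs `F`, `G`, inverse `Ginv` of `G` on `(0,1)`,
and the likelihood ratio `f/g` is strictly increasing on `(a,b)`, then the ROC curve
`x ↦ F (Ginv x)` is strictly convex on `(0,1)`; if the likelihood ratio is strictly
decreasing, the ROC curve is strictly concave on `(0,1)`. -/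
theorem stmt_0 (a b : EReal) (hab : a < b) (f g : ℝ → ℝ)
    (hf_pos : ∀ x : ℝ, a < (x : EReal) → (x : EReal) < b → 0 < f x)
    (hg_pos : ∀ x : ℝ, a < (x : EReal) → (x : EReal) < b → 0 < g x)
    (hf_zero : ∀ x : ℝ, ¬(a < (x : EReal) ∧ (x : EReal) < b) → f x = 0)
    (hg_zero : ∀ x : ℝ, ¬(a < (x : EReal) ∧ (x : EReal) < b) → g x = 0)
    (hf_int : MeasureTheory.Integrable f) (hg_int : MeasureTheory.Integrable g)
    (hf_one : ∫ x : ℝ, f x = 1) (hg_one : ∫ x : ℝ, g x = 1)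
    (F G : ℝ → ℝ)
    (hF : ∀ x : ℝ, F x = ∫ y in Set.Iic x, f y)
    (hG : ∀ x : ℝ, G x = ∫ y in Set.Iic x, g y)
    (Ginv : ℝ → ℝ)
    (hGinv : ∀ u ∈ Set.Ioo (0 : ℝ) 1,
      a < (Ginv u : EReal) ∧ (Ginv u : EReal) < b ∧ G (Ginv u) = u) :
    (StrictMonoOn (fun x => f x / g x) {x : ℝ | a < (x : EReal) ∧ (x : EReal) < b} →
      StrictConvexOn ℝ (Set.Ioo (0 : ℝ) 1) (fun x => F (Ginv x))) ∧
    (StrictAntiOn (fun x => f x / g x) {x : ℝ | a < (x : EReal) ∧ (x : EReal) < b} →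
      StrictConcaveOn ℝ (Set.Ioo (0 : ℝ) 1) (fun x => F (Ginv x))) :=
  stmt_0_general a b f g hg_pos hf_int hg_int F G hF hG Ginv hGinv
end

section
/- For every μ < 0, the function w ↦ Φ(Φ⁻¹(w) − μ) is strictly concave on the interval (0,1). -/
/-!
Write `g w = Φ (Φ⁻¹ w - μ)` and `x = Φ⁻¹ w`. By the chain rule and the inverse function rule,
`g' w = φ (x - μ) / φ x = exp (μ x - μ² / 2)`, where `φ` is the standard normal density.
As `Φ⁻¹` is strictly increasing and `μ < 0`, `g'` is strictly decreasing on `(0, 1)`.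
-/

/-- The standard normal cumulative distribution function. -/
noncomputable def Phi (x : ℝ) : ℝ :=
  ∫ t in Set.Iic x, (Real.sqrt (2 * Real.pi))⁻¹ * Real.exp (-t ^ 2 / 2)

/-- The inverse of the standard normal CDF, mapping (0,1) onto ℝ. -/
noncomputable def PhiInv : ℝ → ℝ := Function.invFun Phi

open Real MeasureTheory ProbabilityTheory Set Filter Topology

lemma hasDerivAt_integral_Iic {f : ℝ → ℝ} (hf : Continuous f) (hfi : Integrable f) (x : ℝ) :
    HasDerivAt (fun y => ∫ t in Iic y, f t) (f x) x := by
  have hsplit : (fun y => ∫ t in Iic y, f t) =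
      fun y => (∫ t in Iic 0, f t) + ∫ t in (0 : ℝ)..y, f t := by
    funext y
    rw [← intervalIntegral.integral_Iic_sub_Iic hfi.integrableOn hfi.integrableOn]
    ring
  rw [hsplit]
  exact (intervalIntegral.integral_hasDerivAt_right hfi.intervalIntegrable
    hf.aestronglyMeasurable.stronglyMeasurableAtFilter hf.continuousAt).const_add _

lemma Phi_eq_integral (x : ℝ) : Phi x = ∫ t in Iic x, gaussianPDFReal 0 1 t := by
  simp [Phi, gaussianPDFReal]

lemma Phi_eq_cdf (x : ℝ) : Phi x = cdf (gaussianReal 0 1) x := by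
  rw [cdf_eq_real, measureReal_def, gaussianReal_apply_eq_integral _ one_ne_zero,
    ENNReal.toReal_ofReal
      (setIntegral_nonneg measurableSet_Iic fun t _ => gaussianPDFReal_nonneg _ _ t)]
  exact Phi_eq_integral x

lemma hasDerivAt_Phi (x : ℝ) : HasDerivAt Phi (gaussianPDFReal 0 1 x) x := by
  simp only [funext Phi_eq_integral]
  exact hasDerivAt_integral_Iic (by unfold gaussianPDFReal; fun_prop)
    (integrable_gaussianPDFReal 0 1) x

lemma Phi_strictMono : StrictMono Phi :=
  strictMono_of_hasDerivAt_pos hasDerivAt_Phi fun x => gaussianPDFReal_pos 0 1 x one_ne_zero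

lemma continuous_Phi : Continuous Phi :=
  continuous_iff_continuousAt.2 fun x => (hasDerivAt_Phi x).continuousAt

lemma tendsto_Phi_atBot : Tendsto Phi atBot (𝓝 0) := by
  simpa only [funext Phi_eq_cdf] using tendsto_cdf_atBot (gaussianReal 0 1)

lemma tendsto_Phi_atTop : Tendsto Phi atTop (𝓝 1) := by
  simpa only [funext Phi_eq_cdf] using tendsto_cdf_atTop (gaussianReal 0 1)

lemma range_Phi : range Phi = Ioo 0 1 := by
  ext w
  constructor
  · rintro ⟨x, rfl⟩
    exact ⟨(Phi_strictMono.monotone.le_of_tendsto tendsto_Phi_atBot (x - 1)).trans_lt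
        (Phi_strictMono (sub_one_lt x)),
      (Phi_strictMono (lt_add_one x)).trans_le
        (Phi_strictMono.monotone.ge_of_tendsto tendsto_Phi_atTop (x + 1))⟩
  · rintro ⟨hw0, hw1⟩
    exact mem_range_of_exists_le_of_exists_ge continuous_Phi
      ((tendsto_Phi_atBot.eventually (eventually_le_nhds hw0)).exists)
      ((tendsto_Phi_atTop.eventually (eventually_ge_nhds hw1)).exists)

lemma Phi_PhiInv {w : ℝ} (hw : w ∈ Ioo (0 : ℝ) 1) : Phi (PhiInv w) = w :=
  Function.invFun_eq (range_Phi ▸ hw : w ∈ range Phi)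

lemma PhiInv_Phi (x : ℝ) : PhiInv (Phi x) = x :=
  Function.leftInverse_invFun Phi_strictMono.injective x

lemma strictMonoOn_PhiInv : StrictMonoOn PhiInv (Ioo 0 1) := fun a ha b hb hab => by
  rwa [← Phi_strictMono.lt_iff_lt, Phi_PhiInv ha, Phi_PhiInv hb]

lemma image_PhiInv : PhiInv '' Ioo 0 1 = univ := by
  rw [← range_Phi, ← range_comp, eq_univ_iff_forall]
  exact fun x => ⟨x, PhiInv_Phi x⟩

lemma hasDerivAt_PhiInv {w : ℝ} (hw : w ∈ Ioo (0 : ℝ) 1) :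
    HasDerivAt PhiInv (gaussianPDFReal 0 1 (PhiInv w))⁻¹ w := by
  have hcont : ContinuousAt PhiInv w :=
    strictMonoOn_PhiInv.continuousAt_of_image_mem_nhds (isOpen_Ioo.mem_nhds hw)
      (image_PhiInv ▸ univ_mem)
  exact (hasDerivAt_Phi _).of_local_left_inverse hcont
    (gaussianPDFReal_pos 0 1 _ one_ne_zero).ne'
    (eventually_of_mem (isOpen_Ioo.mem_nhds hw) fun _ => Phi_PhiInv)

lemma gaussianPDFReal_sub_div (μ x : ℝ) :
    gaussianPDFReal 0 1 (x - μ) / gaussianPDFReal 0 1 x = exp (μ * x - μ ^ 2 / 2) := by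
  rw [gaussianPDFReal, gaussianPDFReal, mul_div_mul_left _ _ (by positivity), ← exp_sub]
  congr 1
  push_cast
  ring

lemma hasDerivAt_Phi_comp_PhiInv_sub (μ : ℝ) {w : ℝ} (hw : w ∈ Ioo (0 : ℝ) 1) :
    HasDerivAt (fun w => Phi (PhiInv w - μ)) (exp (μ * PhiInv w - μ ^ 2 / 2)) w := by
  rw [← gaussianPDFReal_sub_div, div_eq_mul_inv]
  exact (hasDerivAt_Phi _).comp w ((hasDerivAt_PhiInv hw).sub_const μ)

/-- For every μ < 0, the function w ↦ Φ(Φ⁻¹(w) − μ) is strictly concave on (0,1). -/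
theorem stmt_1 (μ : ℝ) (hμ : μ < 0) :
    StrictConcaveOn ℝ (Set.Ioo (0 : ℝ) 1) (fun w => Phi (PhiInv w - μ)) := by
  refine StrictAntiOn.strictConcaveOn_of_deriv (convex_Ioo 0 1)
    (fun w hw => (hasDerivAt_Phi_comp_PhiInv_sub μ hw).continuousAt.continuousWithinAt) ?_
  rw [interior_Ioo]
  intro a ha b hb hab
  rw [(hasDerivAt_Phi_comp_PhiInv_sub μ ha).deriv, (hasDerivAt_Phi_comp_PhiInv_sub μ hb).deriv,
    exp_lt_exp, sub_lt_sub_iff_right]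
  exact mul_lt_mul_of_neg_left (strictMonoOn_PhiInv ha hb hab) hμ
end
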